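/- arXiv:1806.08936 — 2 statements merged into one kernel-verified Lean document; each statement's English description precedes it below -/
import Mathlib

section
/- There exists a universal constant C > 0 such that the following holds (rounding for min-max representatives selection). Let E be a finite set partitioned into p nonempty pairwise disjoint sets E_1, …, E_p, and let U be a finite set of scenarios with |U| = K ≥ 3, each scenario ξ assigning a nonnegative cost c^ξ_e to every e ∈ E. Let x : E → [0,1] satisfy Σ_{e∈E_i} x_e = 1 for every i ∈ {1,…,p}, let L = max_{ξ∈U} Σ_{e∈E} c^ξ_e x_e > 0, and suppose c^ξ_e ≤ L for every ξ ∈ U and every e with x_e > 0. Then there exists X ⊆ E with |X ∩ E_i| = 1 for every i such that Σ_{e∈X} c^ξ_e ≤ C · L · ln K / ln ln K for every ξ ∈ U. -/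
/-!
Randomized rounding: pick from each part `E i` independently the element `e` with probability
`x e`, i.e. pick `f ∈ Fintype.piFinset E` with weight `∏ i, x (f i)`. In a fixed scenario the
normalized cost `∑ i, c ξ (f i) / L` is a sum of independent `[0, 1]`-valued variables of mean at
most `1`, so the Chernoff bound gives `P(cost > t L) ≤ exp (t - 1 - t log t)`. For
`t = e² log K / log log K` this is below `1 / K`, and a union bound over the `K` scenarios leaves
a selection that is good in all of them.
-/

open Finset Function Real

lemma Real.exp_mul_le_one_add_exp_sub_one_mul {d : ℝ} (hd0 : 0 ≤ d) (hd1 : d ≤ 1) (l : ℝ) :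
    exp (l * d) ≤ 1 + (exp l - 1) * d := by
  have := convexOn_exp.2 (Set.mem_univ 0) (Set.mem_univ l) (sub_nonneg.2 hd1) hd0 (by ring)
  simp only [smul_eq_mul, mul_zero, zero_add, exp_zero, mul_one] at this
  rw [mul_comm l d]
  linarith

lemma sum_filter_lt_le_exp_mul_sum {β : Type*} (s : Finset β) {w Y : β → ℝ}
    (hw : ∀ f ∈ s, 0 ≤ w f) {l : ℝ} (hl : 0 ≤ l) (a : ℝ) :
    ∑ f ∈ s with a < Y f, w f ≤ exp (-(l * a)) * ∑ f ∈ s, w f * exp (l * Y f) := by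
  calc ∑ f ∈ s with a < Y f, w f
      ≤ ∑ f ∈ s with a < Y f, w f * exp (l * (Y f - a)) := by
        refine sum_le_sum fun f hf => ?_
        rw [mem_filter] at hf
        exact le_mul_of_one_le_right (hw f hf.1)
          (one_le_exp (mul_nonneg hl (sub_nonneg.2 hf.2.le)))
    _ ≤ ∑ f ∈ s, w f * exp (l * (Y f - a)) :=
        sum_le_sum_of_subset_of_nonneg (filter_subset _ _)
          fun f hf _ => mul_nonneg (hw f hf) (exp_pos _).le
    _ = exp (-(l * a)) * ∑ f ∈ s, w f * exp (l * Y f) := by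
        rw [mul_sum]
        refine sum_congr rfl fun f _ => ?_
        rw [mul_sub, sub_eq_add_neg, exp_add]
        ring

lemma exists_mem_forall_le_of_sum_sum_filter_lt {β κ : Type*} [Fintype κ] (s : Finset β)
    {w : β → ℝ} (hw : ∀ f ∈ s, 0 ≤ w f) (Y : κ → β → ℝ) (a : ℝ)
    (h : ∑ ξ, ∑ f ∈ s with a < Y ξ f, w f < ∑ f ∈ s, w f) :
    ∃ f ∈ s, ∀ ξ, Y ξ f ≤ a := by
  by_contra! hbad
  refine h.not_ge ?_
  calc ∑ f ∈ s, w f ≤ ∑ f ∈ s, ∑ ξ, if a < Y ξ f then w f else 0 := by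
        refine sum_le_sum fun f hf => ?_
        obtain ⟨ξ, hξ⟩ := hbad f hf
        calc w f = if a < Y ξ f then w f else 0 := (if_pos hξ).symm
          _ ≤ ∑ ξ', if a < Y ξ' f then w f else 0 :=
            single_le_sum (f := fun ξ' => if a < Y ξ' f then w f else 0)
              (fun _ _ => ite_nonneg (hw f hf) le_rfl) (mem_univ ξ)
    _ = ∑ ξ, ∑ f ∈ s with a < Y ξ f, w f := by
        rw [sum_comm]
        simp only [sum_filter]

section Rounding

variable {α ι : Type*} [Fintype α] [DecidableEq α] {E : α → Finset ι} {x : ι → ℝ}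

lemma sum_piFinset_prod_eq_one (hx : ∀ i, ∑ e ∈ E i, x e = 1) :
    ∑ f ∈ Fintype.piFinset E, ∏ i, x (f i) = 1 := by
  rw [← prod_univ_sum]
  simp [hx]

lemma sum_piFinset_prod_mul_exp_le (hx0 : ∀ e, 0 ≤ x e) (hx1 : ∀ i, ∑ e ∈ E i, x e = 1)
    {d : ι → ℝ} (hd0 : ∀ e, 0 ≤ d e) (hd1 : ∀ e, 0 < x e → d e ≤ 1) (l : ℝ) :
    ∑ f ∈ Fintype.piFinset E, (∏ i, x (f i)) * exp (l * ∑ i, d (f i)) ≤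
      exp ((exp l - 1) * ∑ i, ∑ e ∈ E i, x e * d e) := by
  have hpart (i : α) : ∑ e ∈ E i, x e * exp (l * d e) ≤
      exp ((exp l - 1) * ∑ e ∈ E i, x e * d e) := by
    calc ∑ e ∈ E i, x e * exp (l * d e) ≤ ∑ e ∈ E i, x e * (1 + (exp l - 1) * d e) := by
          refine sum_le_sum fun e _ => ?_
          rcases (hx0 e).eq_or_lt with hxe | hxe
          · simp [← hxe]
          · exact mul_le_mul_of_nonneg_left
              (exp_mul_le_one_add_exp_sub_one_mul (hd0 e) (hd1 e hxe) l) hxe.le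
      _ = ∑ e ∈ E i, x e + (exp l - 1) * ∑ e ∈ E i, x e * d e := by
          rw [mul_sum, ← sum_add_distrib]
          exact sum_congr rfl fun e _ => by ring
      _ = (exp l - 1) * ∑ e ∈ E i, x e * d e + 1 := by rw [hx1 i, add_comm]
      _ ≤ _ := add_one_le_exp _
  calc ∑ f ∈ Fintype.piFinset E, (∏ i, x (f i)) * exp (l * ∑ i, d (f i))
      = ∏ i, ∑ e ∈ E i, x e * exp (l * d e) := by
        rw [prod_univ_sum]
        refine sum_congr rfl fun f _ => ?_
        rw [prod_mul_distrib, mul_sum, exp_sum]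
    _ ≤ ∏ i, exp ((exp l - 1) * ∑ e ∈ E i, x e * d e) :=
        prod_le_prod (fun i _ => sum_nonneg fun e _ => mul_nonneg (hx0 e) (exp_pos _).le)
          fun i _ => hpart i
    _ = exp ((exp l - 1) * ∑ i, ∑ e ∈ E i, x e * d e) := by rw [← exp_sum, mul_sum]

lemma sum_piFinset_filter_lt_le (hx0 : ∀ e, 0 ≤ x e) (hx1 : ∀ i, ∑ e ∈ E i, x e = 1)
    {d : ι → ℝ} (hd0 : ∀ e, 0 ≤ d e) (hd1 : ∀ e, 0 < x e → d e ≤ 1)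
    (hmean : ∑ i, ∑ e ∈ E i, x e * d e ≤ 1) {t : ℝ} (ht : 1 ≤ t) :
    ∑ f ∈ Fintype.piFinset E with t < ∑ i, d (f i), ∏ i, x (f i) ≤ exp (t - 1 - t * log t) := by
  have ht0 : 0 < t := by linarith
  calc ∑ f ∈ Fintype.piFinset E with t < ∑ i, d (f i), ∏ i, x (f i)
      ≤ exp (-(log t * t)) *
          ∑ f ∈ Fintype.piFinset E, (∏ i, x (f i)) * exp (log t * ∑ i, d (f i)) :=
        sum_filter_lt_le_exp_mul_sum _ (fun f _ => prod_nonneg fun i _ => hx0 _)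
          (log_nonneg ht) t
    _ ≤ exp (-(log t * t)) * exp ((t - 1) * ∑ i, ∑ e ∈ E i, x e * d e) := by
        gcongr
        simpa only [exp_log ht0] using sum_piFinset_prod_mul_exp_le hx0 hx1 hd0 hd1 (log t)
    _ ≤ exp (-(log t * t)) * exp (t - 1) := by
        gcongr
        nlinarith
    _ = exp (t - 1 - t * log t) := by
        rw [← exp_add]
        ring_nf

theorem exists_mem_piFinset_forall_sum_le {κ : Type*} [Fintype κ] (hx0 : ∀ e, 0 ≤ x e)
    (hx1 : ∀ i, ∑ e ∈ E i, x e = 1) {c : κ → ι → ℝ} (hc0 : ∀ ξ e, 0 ≤ c ξ e) {L : ℝ}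
    (hL : 0 < L) (hmean : ∀ ξ, ∑ i, ∑ e ∈ E i, x e * c ξ e ≤ L)
    (hsupp : ∀ ξ e, 0 < x e → c ξ e ≤ L) {t : ℝ} (ht : 1 ≤ t)
    (hκ : Fintype.card κ * exp (t - 1 - t * log t) < 1) :
    ∃ f ∈ Fintype.piFinset E, ∀ ξ, ∑ i, c ξ (f i) ≤ t * L := by
  have htail (ξ : κ) := sum_piFinset_filter_lt_le (E := E) hx0 hx1 (d := fun e => c ξ e / L)
    (fun e => div_nonneg (hc0 ξ e) hL.le) (fun e he => (div_le_one hL).2 (hsupp ξ e he))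
    (by simpa only [mul_div_assoc', ← sum_div, div_le_one hL] using hmean ξ) ht
  obtain ⟨f, hf, hfc⟩ := exists_mem_forall_le_of_sum_sum_filter_lt (Fintype.piFinset E)
    (fun f _ => prod_nonneg fun i _ => hx0 (f i)) (fun ξ f => ∑ i, c ξ (f i) / L) t <| by
    calc ∑ ξ, ∑ f ∈ Fintype.piFinset E with t < ∑ i, c ξ (f i) / L, ∏ i, x (f i)
        ≤ ∑ _ξ : κ, exp (t - 1 - t * log t) := sum_le_sum fun ξ _ => htail ξ
      _ < ∑ f ∈ Fintype.piFinset E, ∏ i, x (f i) := by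
        simpa [sum_piFinset_prod_eq_one hx1] using hκ
  exact ⟨f, hf, fun ξ => by simpa only [← sum_div, div_le_iff₀ hL] using hfc ξ⟩

end Rounding

section Selection

variable {α ι : Type*} [Fintype α] [DecidableEq α] {E : α → Finset ι} {f : α → ι}

lemma injective_of_mem_piFinset (hE : Pairwise (Disjoint on E))
    (hf : f ∈ Fintype.piFinset E) : Function.Injective f := by
  intro i j hij
  by_contra hne
  rw [Fintype.mem_piFinset] at hf
  exact disjoint_left.1 (hE hne) (hf i) (hij ▸ hf j)

lemma card_image_inter_eq_one [DecidableEq ι] (hE : Pairwise (Disjoint on E))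
    (hf : f ∈ Fintype.piFinset E) (i : α) : (univ.image f ∩ E i).card = 1 := by
  rw [card_eq_one]
  refine ⟨f i, eq_singleton_iff_unique_mem.2 ⟨?_, ?_⟩⟩
  · exact mem_inter.2 ⟨mem_image_of_mem f (mem_univ i), Fintype.mem_piFinset.1 hf i⟩
  · simp only [mem_inter, mem_image, mem_univ, true_and]
    rintro _ ⟨⟨j, rfl⟩, hj⟩
    by_contra hne
    exact disjoint_left.1 (hE fun hji => hne (congrArg f hji)) (Fintype.mem_piFinset.1 hf j) hj

end Selection

/-- Chosen so that `t (log t - 1) ≥ log K`; the factor `e²` absorbs the `log log log K` term. -/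
noncomputable def chernoffThreshold (K : ℝ) : ℝ := exp 2 * log K / log (log K)

lemma le_exp_two_mul_one_add_sub_log {s : ℝ} (hs : 0 < s) : s ≤ exp 2 * (1 + s - log s) := by
  have hlog : exp 1 * log s ≤ s := by
    have := log_le_sub_one_of_pos (div_pos hs (exp_pos 1))
    rw [log_div hs.ne' (exp_pos 1).ne', log_exp, le_sub_iff_add_le, sub_add_cancel,
      le_div_iff₀ (exp_pos 1)] at this
    linarith
  have he : (2.7 : ℝ) < exp 1 := by linarith [exp_one_gt_d9]
  have he2 : exp 2 = exp 1 * exp 1 := by rw [← exp_add]; norm_num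
  rw [he2]
  nlinarith [mul_le_mul_of_nonneg_left hlog (exp_pos 1).le,
    mul_pos hs (by nlinarith : (0 : ℝ) < exp 1 * exp 1 - exp 1 - 1)]

lemma one_lt_log_of_three_le {K : ℝ} (hK : 3 ≤ K) : 1 < log K := by
  rw [lt_log_iff_exp_lt (by linarith)]
  linarith [exp_one_lt_d9]

lemma one_le_chernoffThreshold {K : ℝ} (hK : 3 ≤ K) : 1 ≤ chernoffThreshold K := by
  have hu := one_lt_log_of_three_le hK
  have hs : 0 < log (log K) := log_pos hu
  rw [chernoffThreshold, le_div_iff₀ hs, one_mul]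
  have := log_le_sub_one_of_pos (zero_lt_one.trans hu)
  nlinarith [add_one_le_exp 2]

lemma mul_exp_chernoffThreshold_lt_one {K : ℝ} (hK : 3 ≤ K) :
    K * exp (chernoffThreshold K - 1 - chernoffThreshold K * log (chernoffThreshold K)) < 1 := by
  set u := log K
  set s := log u
  have hu := one_lt_log_of_three_le hK
  have hs : 0 < s := log_pos hu
  have hlog : log (chernoffThreshold K) = 2 + s - log s := by
    rw [chernoffThreshold, log_div (by positivity) hs.ne', log_mul (exp_pos 2).ne' (by positivity),
      log_exp]
  have hkey : u ≤ chernoffThreshold K * (log (chernoffThreshold K) - 1) := by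
    rw [hlog, chernoffThreshold, div_mul_eq_mul_div, le_div_iff₀ hs]
    nlinarith [mul_le_mul_of_nonneg_left (le_exp_two_mul_one_add_sub_log hs) (by positivity : 0 ≤ u)]
  have hK0 : 0 < K := by linarith
  calc K * exp (chernoffThreshold K - 1 - chernoffThreshold K * log (chernoffThreshold K))
      < K * exp (-u) := by gcongr; linarith
    _ = 1 := by rw [exp_neg, exp_log hK0, mul_inv_cancel₀ hK0.ne']

/-- Derandomized LP-rounding for min-max representatives selection
(Theorem 1 of the paper): the ground set is partitioned into nonempty disjoint
sets `E 0, …, E (p-1)`; any fractional solution `x` placing total weight `1` on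
each part, with max scenario cost `L` (attained) and support costs `≤ L`, can
be rounded to a set `X` picking exactly one element per part with
`Σ_{e∈X} c ξ e ≤ C·L·ln K / ln ln K` for every scenario `ξ`. -/
theorem stmt7 :
    ∃ C : ℝ, 0 < C ∧
      ∀ (ι : Type) [Fintype ι] [DecidableEq ι] (p K : ℕ)
        (E : Fin p → Finset ι) (c : Fin K → ι → ℝ) (x : ι → ℝ) (L : ℝ),
        3 ≤ K →
        (∀ i, (E i).Nonempty) →
        (∀ i j, i ≠ j → Disjoint (E i) (E j)) →
        (Finset.univ.biUnion E = Finset.univ) →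
        (∀ ξ e, 0 ≤ c ξ e) →
        (∀ e, 0 ≤ x e ∧ x e ≤ 1) →
        (∀ i, ∑ e ∈ E i, x e = 1) →
        0 < L →
        (∀ ξ, ∑ e, c ξ e * x e ≤ L) →
        (∃ ξ, ∑ e, c ξ e * x e = L) →
        (∀ ξ e, 0 < x e → c ξ e ≤ L) →
        ∃ X : Finset ι, (∀ i, (X ∩ E i).card = 1) ∧
          ∀ ξ, ∑ e ∈ X, c ξ e ≤ C * L * Real.log K / Real.log (Real.log K) := by
  refine ⟨exp 2, exp_pos 2, ?_⟩
  intro ι _ _ p K E c x L hK _ hdisj hcover hc hx hx1 hL hmean _ hsupp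
  have hE : Pairwise (Disjoint on E) := fun i j h => hdisj i j h
  have hK' : (3 : ℝ) ≤ K := by exact_mod_cast hK
  have hmean' (ξ : Fin K) : ∑ i, ∑ e ∈ E i, x e * c ξ e ≤ L := by
    rw [← sum_biUnion (hE.set_pairwise _), hcover]
    simpa only [mul_comm] using hmean ξ
  obtain ⟨f, hf, hfc⟩ := exists_mem_piFinset_forall_sum_le (fun e => (hx e).1) hx1 hc hL hmean'
    hsupp (one_le_chernoffThreshold hK') (by simpa using mul_exp_chernoffThreshold_lt_one hK')
  refine ⟨univ.image f, card_image_inter_eq_one hE hf, fun ξ => ?_⟩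
  rw [sum_image fun i _ j _ h => injective_of_mem_piFinset hE hf h]
  calc ∑ i, c ξ (f i) ≤ chernoffThreshold K * L := hfc ξ
    _ = exp 2 * L * log K / log (log K) := by rw [chernoffThreshold]; ring
end

section
/- There exists a universal constant C > 0 such that the following holds (rounding for min-max selecting items). Let E be a finite set, p a positive integer, and U a finite set of scenarios with |U| = K ≥ 3, each scenario ξ assigning a nonnegative cost c^ξ_e to every e ∈ E. Let x : E → [0,1] satisfy Σ_{e∈E} x_e = p, let L = max_{ξ∈U} Σ_{e∈E} c^ξ_e x_e > 0, and suppose c^ξ_e ≤ L for every ξ ∈ U and every e with x_e > 0. Then there exists X ⊆ E with |X| = p such that Σ_{e∈X} c^ξ_e ≤ C · L · ln K / ln ln K for every ξ ∈ U. -/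
/-!
Pipage rounding guided by a pessimistic estimator. Put `b = ln K` and give element `e` the weight
`g ξ e = b ^ (c ξ e / L)` in scenario `ξ`. The potential `Φ y = ∑ ξ, ∏ e, (1 + y e * (g ξ e - 1))`
restricted to any line `y + t • (eᵢ - eⱼ)` is a concave quadratic in `t`, so one of the two moves
that make coordinate `i` or `j` integral does not increase it. Iterating until `y` is integral gives
a set `X` with `|X| = p` and `Φ 1_X ≤ Φ x`. Bernoulli's inequality and `1 + z ≤ exp z` bound
`Φ x ≤ K e^(b - 1)`, whereas `Φ 1_X ≥ b ^ (c ξ X / L)` for every `ξ`; taking logarithms,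
`c ξ X ≤ 2 L ln K / ln ln K`.
-/

open Finset

section Exchange

variable {ι : Type*} [DecidableEq ι] {y : ι → ℝ} {i j e : ι} {t : ℝ}

def exchange (i j : ι) : ι → ℝ := Pi.single i 1 - Pi.single j 1

@[simp] theorem exchange_apply_left (hij : i ≠ j) : exchange i j i = 1 := by
  simp [exchange, hij]

@[simp] theorem exchange_apply_right (hij : i ≠ j) : exchange i j j = -1 := by
  simp [exchange, hij.symm]

@[simp] theorem exchange_apply_of_ne (hi : e ≠ i) (hj : e ≠ j) : exchange i j e = 0 := by
  simp [exchange, hi, hj]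

theorem add_smul_exchange_mem_Icc (hij : i ≠ j) (hy : y ∈ Set.Icc 0 1)
    (hi : y i + t ∈ Set.Icc 0 1) (hj : y j - t ∈ Set.Icc 0 1) :
    y + t • exchange i j ∈ Set.Icc 0 1 := by
  suffices ∀ e, (y + t • exchange i j) e ∈ Set.Icc 0 1 from
    ⟨fun e => (this e).1, fun e => (this e).2⟩
  intro e
  by_cases hei : e = i
  · subst hei; simpa [hij] using hi
  by_cases hej : e = j
  · subst hej; simpa [hij, sub_eq_add_neg] using hj
  simpa [hei, hej] using ⟨hy.1 e, hy.2 e⟩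

end Exchange

section Pipage

variable {ι : Type*} [Fintype ι] {y : ι → ℝ}

noncomputable def fractionalSupport (y : ι → ℝ) : Finset ι := {e | y e ∈ Set.Ioo 0 1}

theorem mem_fractionalSupport {e : ι} : e ∈ fractionalSupport y ↔ y e ∈ Set.Ioo 0 1 := by
  simp [fractionalSupport]

theorem eq_indicator_of_fractionalSupport_eq_empty (hy : y ∈ Set.Icc 0 1)
    (h : fractionalSupport y = ∅) :
    y = Set.indicator ↑({e | y e = 1} : Finset ι) 1 := by
  funext e
  have : y e ∉ Set.Ioo 0 1 := by rw [← mem_fractionalSupport, h]; exact notMem_empty e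
  by_cases h1 : y e = 1
  · simp [h1]
  · simp only [coe_filter, mem_univ, true_and, Set.indicator_apply, Set.mem_ofPred_eq, h1,
      if_false]
    by_contra h0
    exact this ⟨lt_of_le_of_ne (hy.1 e) (Ne.symm h0), lt_of_le_of_ne (hy.2 e) h1⟩

variable [DecidableEq ι] {i j : ι} {t : ℝ} {Φ : (ι → ℝ) → ℝ}

@[simp] theorem sum_exchange (i j : ι) : ∑ e, exchange i j e = 0 := by
  simp [exchange, sum_sub_distrib]

def ExchangeConcave (Φ : (ι → ℝ) → ℝ) : Prop :=
  ∀ y ∈ Set.Icc (0 : ι → ℝ) 1, ∀ i j, i ≠ j →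
    ConcaveOn ℝ Set.univ fun t : ℝ => Φ (y + t • exchange i j)

theorem fractionalSupport_add_smul_exchange_ssubset (hij : i ≠ j)
    (hi : i ∈ fractionalSupport y) (hj : j ∈ fractionalSupport y)
    (hint : y i + t ∉ Set.Ioo 0 1 ∨ y j - t ∉ Set.Ioo 0 1) :
    fractionalSupport (y + t • exchange i j) ⊂ fractionalSupport y := by
  have hsub : fractionalSupport (y + t • exchange i j) ⊆ fractionalSupport y := by
    intro e he
    by_cases hei : e = i
    · exact hei ▸ hi
    by_cases hej : e = j
    · exact hej ▸ hj
    simpa [mem_fractionalSupport, hei, hej] using he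
  rw [ssubset_iff_of_subset hsub]
  rcases hint with h | h
  · exact ⟨i, hi, by simpa [mem_fractionalSupport, hij] using h⟩
  · exact ⟨j, hj, by simpa [mem_fractionalSupport, hij, sub_eq_add_neg] using h⟩

theorem card_fractionalSupport_ne_one (hy : y ∈ Set.Icc 0 1) {p : ℕ} (hsum : ∑ e, y e = p) :
    #(fractionalSupport y) ≠ 1 := by
  intro h
  obtain ⟨i, hF⟩ := card_eq_one.1 h
  obtain ⟨hi0, hi1⟩ := mem_fractionalSupport.1 (hF ▸ mem_singleton_self i)
  have hbool : ∀ e ∈ univ.erase i, y e = (if y e = 1 then 1 else 0 : ℕ) := by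
    intro e he
    have : y e ∉ Set.Ioo 0 1 := by
      rw [← mem_fractionalSupport, hF, mem_singleton]; exact ne_of_mem_erase he
    rcases (hy.1 e).eq_or_lt with h0 | h0
    · simp [← h0]
    · have : y e = 1 := by by_contra h1; exact this ⟨h0, lt_of_le_of_ne (hy.2 e) h1⟩
      simp [this]
  set m := ∑ e ∈ univ.erase i, (if y e = 1 then 1 else 0 : ℕ)
  have hyi : y i = p - m := by
    rw [← hsum, ← add_sum_erase _ _ (mem_univ i), sum_congr rfl hbool]; push_cast [m]; ring
  rw [hyi] at hi0 hi1
  have : m < p := by exact_mod_cast sub_pos.1 hi0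
  have : p < m + 1 := by exact_mod_cast (sub_lt_iff_lt_add'.1 hi1)
  omega

theorem ExchangeConcave.exists_le_fractionalSupport_ssubset (hΦ : ExchangeConcave Φ)
    (hy : y ∈ Set.Icc 0 1) (hij : i ≠ j) (hi : i ∈ fractionalSupport y)
    (hj : j ∈ fractionalSupport y) :
    ∃ y' ∈ Set.Icc 0 1, ∑ e, y' e = ∑ e, y e ∧ Φ y' ≤ Φ y ∧
      fractionalSupport y' ⊂ fractionalSupport y := by
  obtain ⟨hi0, hi1⟩ := mem_fractionalSupport.1 hi
  obtain ⟨hj0, hj1⟩ := mem_fractionalSupport.1 hj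
  have move : ∀ t, y i + t ∈ Set.Icc 0 1 → y j - t ∈ Set.Icc 0 1 →
      (y i + t ∉ Set.Ioo 0 1 ∨ y j - t ∉ Set.Ioo 0 1) → Φ (y + t • exchange i j) ≤ Φ y →
      ∃ y' ∈ Set.Icc 0 1, ∑ e, y' e = ∑ e, y e ∧ Φ y' ≤ Φ y ∧
        fractionalSupport y' ⊂ fractionalSupport y := fun t hti htj hint hle =>
    ⟨_, add_smul_exchange_mem_Icc hij hy hti htj, by simp [sum_add_distrib, ← mul_sum], hle,
      fractionalSupport_add_smul_exchange_ssubset hij hi hj hint⟩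
  set down := min (y i) (1 - y j)
  set up := min (1 - y i) (y j)
  have hdown : 0 ≤ down := le_min hi0.le (by linarith)
  have hup : 0 ≤ up := le_min (by linarith) hj0.le
  have hmin := (hΦ y hy i j hij).min_le_of_mem_Icc (Set.mem_univ (-down)) (Set.mem_univ up)
    (z := 0) ⟨by linarith, hup⟩
  simp only [zero_smul, add_zero, min_le_iff] at hmin
  rcases hmin with h | h
  · have : down ≤ y i := min_le_left _ _
    have : down ≤ 1 - y j := min_le_right _ _
    refine move (-down) ⟨by linarith, by linarith⟩ ⟨by linarith, by linarith⟩ ?_ h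
    rcases min_choice (y i) (1 - y j) with h' | h'
    · left; simp [down, h']
    · right; simp [down, h']
  · have : up ≤ 1 - y i := min_le_left _ _
    have : up ≤ y j := min_le_right _ _
    refine move up ⟨by linarith, by linarith⟩ ⟨by linarith, by linarith⟩ ?_ h
    rcases min_choice (1 - y i) (y j) with h' | h'
    · left; simp [up, h']
    · right; simp [up, h']

theorem ExchangeConcave.exists_card_eq_le (hΦ : ExchangeConcave Φ) {p : ℕ}
    (hy : y ∈ Set.Icc 0 1) (hsum : ∑ e, y e = p) :
    ∃ X : Finset ι, #X = p ∧ Φ (Set.indicator ↑X 1) ≤ Φ y := by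
  induction hF : fractionalSupport y using Finset.strongInduction generalizing y with
  | H F ih =>
    rcases Nat.lt_or_ge 1 #F with hF1 | hF1
    · obtain ⟨i, hi, j, hj, hij⟩ := one_lt_card.1 hF1
      subst hF
      obtain ⟨y', hy', hsum', hle, hssub⟩ :=
        hΦ.exists_le_fractionalSupport_ssubset hy hij hi hj
      obtain ⟨X, hX, hXle⟩ := ih _ hssub hy' (hsum'.trans hsum) rfl
      exact ⟨X, hX, hXle.trans hle⟩
    · have hF0 : F = ∅ := by
        have := card_fractionalSupport_ne_one hy hsum
        rw [hF] at this
        exact card_eq_zero.1 (by omega)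
      have hyX := eq_indicator_of_fractionalSupport_eq_empty hy (hF.trans hF0)
      refine ⟨_, ?_, (congrArg Φ hyX).ge⟩
      rw [hyX] at hsum
      simpa [Set.indicator_apply] using hsum

end Pipage

theorem concaveOn_sum {𝕜 E β κ : Type*} [Semiring 𝕜] [PartialOrder 𝕜] [AddCommMonoid E]
    [AddCommMonoid β] [PartialOrder β] [IsOrderedAddMonoid β] [SMul 𝕜 E] [DistribMulAction 𝕜 β]
    {S : Set E} (hS : Convex 𝕜 S) {s : Finset κ} {f : κ → E → β}
    (hf : ∀ k ∈ s, ConcaveOn 𝕜 S (f k)) : ConcaveOn 𝕜 S fun x => ∑ k ∈ s, f k x := by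
  classical
  induction s using Finset.induction_on with
  | empty => exact ⟨hS, fun _ _ _ _ _ _ _ _ _ => by simp⟩
  | insert k s hk ih =>
    simp only [sum_insert hk]
    exact (hf k (mem_insert_self k s)).add (ih fun k' hk' => hf k' (mem_insert_of_mem hk'))

theorem concaveOn_add_mul_mul_sub_mul {a b u v : ℝ} (huv : 0 ≤ u * v) :
    ConcaveOn ℝ Set.univ fun t => (a + t * u) * (b - t * v) := by
  refine ⟨convex_univ, fun x _ y _ α β hα hβ hαβ => ?_⟩
  obtain rfl : β = 1 - α := by linarith
  simp only [smul_eq_mul]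
  nlinarith [mul_nonneg (mul_nonneg hα hβ) (mul_nonneg huv (sq_nonneg (x - y)))]

section Potential

variable {ι κ : Type*} [Fintype ι] [Fintype κ]

/-- The multilinear extension of `X ↦ ∑ ζ, ∏ e ∈ X, g ζ e`, i.e. its expectation when each `e` is
put in `X` independently with probability `y e`. -/
def potential (g : κ → ι → ℝ) (y : ι → ℝ) : ℝ := ∑ ζ, ∏ e, (1 + y e * (g ζ e - 1))

theorem potential_indicator (g : κ → ι → ℝ) (X : Finset ι) :
    potential g (Set.indicator ↑X 1) = ∑ ζ, ∏ e ∈ X, g ζ e := by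
  classical
  simp [potential, Set.indicator_apply, add_ite, prod_ite_mem]

theorem exchangeConcave_potential [DecidableEq ι] {g : κ → ι → ℝ} (hg : ∀ ζ e, 1 ≤ g ζ e) :
    ExchangeConcave (potential g) := by
  intro y hy i j hij
  refine concaveOn_sum convex_univ fun ζ _ => ?_
  have hj : j ∈ univ.erase i := mem_erase.2 ⟨hij.symm, mem_univ j⟩
  set P := ∏ e ∈ (univ.erase i).erase j, (1 + y e * (g ζ e - 1))
  have hP : 0 ≤ P := prod_nonneg fun e _ =>
    add_nonneg zero_le_one (mul_nonneg (hy.1 e) (sub_nonneg.2 (hg ζ e)))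
  have hline : ∀ t : ℝ, ∏ e, (1 + (y + t • exchange i j) e * (g ζ e - 1)) =
      P • ((1 + y i * (g ζ i - 1) + t * (g ζ i - 1)) *
        (1 + y j * (g ζ j - 1) - t * (g ζ j - 1))) := by
    intro t
    rw [← mul_prod_erase _ _ (mem_univ i), ← mul_prod_erase _ _ hj,
      prod_congr rfl fun e he => by
        rw [Pi.add_apply, Pi.smul_apply,
          exchange_apply_of_ne (ne_of_mem_erase (mem_of_mem_erase he)) (ne_of_mem_erase he),
          smul_zero, add_zero]]
    simp [hij]
    ring
  simp only [hline]
  exact (concaveOn_add_mul_mul_sub_mul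
    (mul_nonneg (sub_nonneg.2 (hg ζ i)) (sub_nonneg.2 (hg ζ j)))).smul hP

theorem potential_le_card_mul_exp {g : κ → ι → ℝ} {y : ι → ℝ} {B : ℝ} (hy : 0 ≤ y)
    (hg : ∀ ζ e, 1 ≤ g ζ e) (hB : ∀ ζ, ∑ e, y e * (g ζ e - 1) ≤ B) :
    potential g y ≤ Fintype.card κ * Real.exp B := by
  have hterm : ∀ ζ, ∏ e, (1 + y e * (g ζ e - 1)) ≤ Real.exp B := fun ζ =>
    calc ∏ e, (1 + y e * (g ζ e - 1))
        ≤ ∏ e, Real.exp (y e * (g ζ e - 1)) :=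
          prod_le_prod
            (fun e _ => add_nonneg zero_le_one (mul_nonneg (hy e) (sub_nonneg.2 (hg ζ e))))
            fun e _ => by linarith [Real.add_one_le_exp (y e * (g ζ e - 1))]
      _ = Real.exp (∑ e, y e * (g ζ e - 1)) := (Real.exp_sum _ _).symm
      _ ≤ Real.exp B := Real.exp_le_exp.2 (hB ζ)
  simpa [potential] using sum_le_sum fun ζ (_ : ζ ∈ univ) => hterm ζ

end Potential

section SelectingItems

open Real

variable {ι : Type*} [Fintype ι] {x : ι → ℝ} {L b : ℝ}

theorem sum_mul_rpow_div_sub_one_le {c : ι → ℝ} (hc : ∀ e, 0 ≤ c e) (hx : 0 ≤ x) (hL : 0 < L)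
    (hcx : ∑ e, c e * x e ≤ L) (hsupp : ∀ e, 0 < x e → c e ≤ L) (hb : 1 ≤ b) :
    ∑ e, x e * (b ^ (c e / L) - 1) ≤ b - 1 := by
  have hterm : ∀ e, x e * (b ^ (c e / L) - 1) ≤ (b - 1) / L * (c e * x e) := by
    intro e
    rcases (hx e).eq_or_lt with h0 | hpos
    · simp [← h0]
    have hbern : b ^ (c e / L) ≤ 1 + c e / L * (b - 1) := by
      simpa using rpow_one_add_le_one_add_mul_self (s := b - 1) (by linarith)
        (div_nonneg (hc e) hL.le) ((div_le_one hL).2 (hsupp e hpos))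
    calc x e * (b ^ (c e / L) - 1) ≤ x e * (c e / L * (b - 1)) :=
          mul_le_mul_of_nonneg_left (by linarith) (hx e)
      _ = (b - 1) / L * (c e * x e) := by ring
  calc ∑ e, x e * (b ^ (c e / L) - 1) ≤ ∑ e, (b - 1) / L * (c e * x e) :=
        sum_le_sum fun e _ => hterm e
    _ = (b - 1) / L * ∑ e, c e * x e := (mul_sum _ _ _).symm
    _ ≤ (b - 1) / L * L := by gcongr
    _ = b - 1 := by field_simp

theorem exists_card_eq_rpow_sum_div_le [DecidableEq ι] {κ : Type*} [Fintype κ] {c : κ → ι → ℝ}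
    {p : ℕ} (hc : ∀ ξ e, 0 ≤ c ξ e) (hx : x ∈ Set.Icc 0 1) (hsum : ∑ e, x e = p) (hL : 0 < L)
    (hcx : ∀ ξ, ∑ e, c ξ e * x e ≤ L) (hsupp : ∀ ξ e, 0 < x e → c ξ e ≤ L) (hb : 1 ≤ b) :
    ∃ X : Finset ι, #X = p ∧
      ∀ ξ, b ^ ((∑ e ∈ X, c ξ e) / L) ≤ Fintype.card κ * exp (b - 1) := by
  set g : κ → ι → ℝ := fun ξ e => b ^ (c ξ e / L)
  have hg : ∀ ξ e, 1 ≤ g ξ e := fun ξ e => one_le_rpow hb (div_nonneg (hc ξ e) hL.le)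
  obtain ⟨X, hX, hXle⟩ := (exchangeConcave_potential hg).exists_card_eq_le hx hsum
  refine ⟨X, hX, fun ξ => ?_⟩
  calc b ^ ((∑ e ∈ X, c ξ e) / L) = ∏ e ∈ X, g ξ e := by
        rw [sum_div, rpow_sum_of_pos (by linarith)]
    _ ≤ ∑ ζ, ∏ e ∈ X, g ζ e :=
        single_le_sum (f := fun ζ => ∏ e ∈ X, g ζ e)
          (fun ζ _ => prod_nonneg fun e _ => zero_le_one.trans (hg ζ e)) (mem_univ ξ)
    _ = potential g (Set.indicator ↑X 1) := (potential_indicator g X).symm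
    _ ≤ potential g x := hXle
    _ ≤ Fintype.card κ * exp (b - 1) := potential_le_card_mul_exp hx.1 hg fun ζ =>
        sum_mul_rpow_div_sub_one_le (hc ζ) hx.1 hL (hcx ζ) (hsupp ζ) hb

theorem le_two_mul_log_div_log_log {K s : ℝ} (hK : exp 1 < K) (hL : 0 < L)
    (h : log K ^ (s / L) ≤ K * exp (log K - 1)) : s ≤ 2 * L * log K / log (log K) := by
  have hK0 : 0 < K := (exp_pos 1).trans hK
  have hlogK : 1 < log K := (lt_log_iff_exp_lt hK0).2 hK
  have hloglogK : 0 < log (log K) := log_pos hlogK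
  have hlog := log_le_log (rpow_pos_of_pos (by linarith) _) h
  rw [log_rpow (by linarith), log_mul hK0.ne' (exp_pos _).ne', log_exp] at hlog
  rw [le_div_iff₀ hloglogK]
  calc s * log (log K) = L * (s / L * log (log K)) := by field_simp
    _ ≤ L * (log K + (log K - 1)) := by gcongr
    _ ≤ 2 * L * log K := by nlinarith

end SelectingItems

/-- Derandomized LP-rounding for min-max selecting items (Theorem 1 of the
paper): any fractional solution `x` of total weight `p`, with max scenario cost
`L` (attained) and support costs `≤ L`, can be rounded to a set `X` of exactly
`p` elements with `Σ_{e∈X} c ξ e ≤ C·L·ln K / ln ln K` for every scenario. -/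
theorem stmt8 :
    ∃ C : ℝ, 0 < C ∧
      ∀ (ι : Type) [Fintype ι] [DecidableEq ι] (p K : ℕ)
        (c : Fin K → ι → ℝ) (x : ι → ℝ) (L : ℝ),
        0 < p → 3 ≤ K →
        (∀ ξ e, 0 ≤ c ξ e) →
        (∀ e, 0 ≤ x e ∧ x e ≤ 1) →
        (∑ e, x e = (p : ℝ)) →
        0 < L →
        (∀ ξ, ∑ e, c ξ e * x e ≤ L) →
        (∃ ξ, ∑ e, c ξ e * x e = L) →
        (∀ ξ e, 0 < x e → c ξ e ≤ L) →
        ∃ X : Finset ι, X.card = p ∧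
          ∀ ξ, ∑ e ∈ X, c ξ e ≤ C * L * Real.log K / Real.log (Real.log K) := by
  refine ⟨2, two_pos, fun ι _ _ p K c x L _ hK hc hx hxsum hL hcx _ hsupp => ?_⟩
  have hexpK : Real.exp 1 < K := by
    have : (3 : ℝ) ≤ K := by exact_mod_cast hK
    linarith [Real.exp_one_lt_d9]
  have hlogK : 1 ≤ Real.log K := ((Real.lt_log_iff_exp_lt (by positivity)).2 hexpK).le
  obtain ⟨X, hX, hXle⟩ := exists_card_eq_rpow_sum_div_le hc
    ⟨fun e => (hx e).1, fun e => (hx e).2⟩ hxsum hL hcx hsupp hlogK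
  refine ⟨X, hX, fun ξ => le_two_mul_log_div_log_log hexpK hL ?_⟩
  simpa using hXle ξ
end
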